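/- arXiv:1201.0290 — 3 statements merged into one kernel-verified Lean document; each statement's English description precedes it below -/
import Mathlib

section
/- Let K be a field, V a K-vector space, B : V → V → K a bilinear form that is nondegenerate in the sense that B(x, y) = 0 for all y implies x = 0, and Q : V → V a linear endomorphism with Q ∘ Q = 0 and B(Q x, y) = B(x, Q y) for all x, y. Then the kernel of Q is a coisotropic subspace: every x ∈ V satisfying B(x, w) = 0 for all w ∈ ker Q lies in ker Q, i.e. (ker Q)^⊥ ⊆ ker Q. -/
/-- The kernel of a square-zero, self-adjoint endomorphism is coisotropic:
`(ker Q)^⊥ ⊆ ker Q`. -/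
theorem ker_coisotropic
    {K V : Type*} [Field K] [AddCommGroup V] [Module K V]
    (B : V →ₗ[K] V →ₗ[K] K) (Q : V →ₗ[K] V)
    (hnd : ∀ x : V, (∀ y : V, B x y = 0) → x = 0)
    (hQ2 : Q ∘ₗ Q = 0)
    (hsa : ∀ x y : V, B (Q x) y = B x (Q y)) :
    ∀ x : V, (∀ w : V, Q w = 0 → B x w = 0) → Q x = 0 := by
  intro x hx
  refine hnd (Q x) fun y => ?_
  calc B (Q x) y = B x (Q y) := hsa x y
    _ = 0 := hx (Q y) (LinearMap.congr_fun hQ2 y)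
end

section
/- Let K be a field, V and W K-vector spaces, π : V → W a surjective linear map, and Q : V → V, q : W → W linear endomorphisms with π ∘ Q = q ∘ π and Q ∘ Q = 0. Let A = {ξ ∈ ker Q | π(ξ) ∈ range q}, a subspace of V containing range Q. Then there is a K-linear isomorphism A ⧸ (range Q) ≅ (ker Q ∩ ker π) ⧸ (range Q ∩ ker π), induced by sending ξ ∈ A to ξ − Q(η), where η ∈ V is any element with π(η) = w for some w with π(ξ) = q(w). -/
/-!
Since `Q ∘ Q = 0` and `π ∘ Q = q ∘ π`, the image of `Q` lies in `A = {ξ ∈ ker Q | π ξ ∈ range q}`,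
and every `ξ ∈ A` splits as `(ξ - Q η) + Q η` with `ξ - Q η ∈ ker Q ∩ ker π` as soon as `π ξ = q (π η)`,
which surjectivity of `π` allows. Hence `A = (ker Q ∩ ker π) + range Q`, and the isomorphism is the
inverse of the second isomorphism theorem `B ⧸ (B ∩ range Q) ≃ (B + range Q) ⧸ range Q`
for `B = ker Q ∩ ker π`.
-/

namespace Submodule

variable {R M : Type*} [Ring R] [AddCommGroup M] [Module R M]

/-- The second isomorphism theorem `p ⧸ (p ⊓ p') ≃ (p ⊔ p') ⧸ p'`, with `p ⊓ p'` and `p ⊔ p'`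
given only up to equality. -/
noncomputable def quotientEquivOfSupEq {p p' r A : Submodule R M} (hr : p ⊓ r = p ⊓ p')
    (hA : p ⊔ p' = A) : (p ⧸ r.comap p.subtype) ≃ₗ[R] A ⧸ p'.comap A.subtype :=
  (quotEquivOfEq _ _ (by rw [← comap_inf, ← hr, comap_inf, comap_subtype_self, top_inf_eq])).trans
    ((LinearMap.quotientInfEquivSupQuotient p p').trans
      (Quotient.equiv _ _ (LinearEquiv.ofEq _ _ hA) (by ext; simp)))

theorem quotientEquivOfSupEq_mk {p p' r A : Submodule R M} (hr : p ⊓ r = p ⊓ p')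
    (hA : p ⊔ p' = A) (x : p) :
    quotientEquivOfSupEq hr hA (Quotient.mk x) = Quotient.mk ⟨x, hA ▸ mem_sup_left x.2⟩ :=
  rfl

end Submodule

open LinearMap Submodule

section

variable {R V W : Type*} [Ring R] [AddCommGroup V] [Module R V] [AddCommGroup W] [Module R W]
  {π : V →ₗ[R] W} {Q : V →ₗ[R] V} {q : W →ₗ[R] W}

theorem sub_apply_mem_ker_inf_ker (hcomm : π ∘ₗ Q = q ∘ₗ π) (hQ2 : Q ∘ₗ Q = 0) {ξ η : V} {w : W}
    (hξ : Q ξ = 0) (hw : π ξ = q w) (hη : π η = w) : ξ - Q η ∈ ker Q ⊓ ker π := by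
  refine mem_inf.2 ⟨?_, ?_⟩
  · rw [mem_ker, map_sub, hξ, ← comp_apply, hQ2, LinearMap.zero_apply, sub_zero]
  · rw [mem_ker, map_sub, ← comp_apply, hcomm, comp_apply, hη, hw, sub_self]

theorem range_le_ker_inf_comap_range (hcomm : π ∘ₗ Q = q ∘ₗ π) (hQ2 : Q ∘ₗ Q = 0) :
    range Q ≤ ker Q ⊓ (range q).comap π := by
  rintro _ ⟨v, rfl⟩
  refine mem_inf.2 ⟨?_, ⟨π v, ?_⟩⟩
  · rw [mem_ker, ← comp_apply, hQ2, LinearMap.zero_apply]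
  · rw [← comp_apply, ← hcomm, comp_apply]

theorem ker_inf_ker_sup_range_eq (hsurj : Function.Surjective π) (hcomm : π ∘ₗ Q = q ∘ₗ π)
    (hQ2 : Q ∘ₗ Q = 0) : ker Q ⊓ ker π ⊔ range Q = ker Q ⊓ (range q).comap π := by
  refine le_antisymm (sup_le (inf_le_inf_left _ fun v hv => ?_)
    (range_le_ker_inf_comap_range hcomm hQ2)) fun ξ hξ => ?_
  · rw [mem_comap, mem_ker.1 hv]
    exact zero_mem _
  · obtain ⟨hξQ, w, hw⟩ := mem_inf.1 hξ
    obtain ⟨η, hη⟩ := hsurj w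
    rw [← sub_add_cancel ξ (Q η)]
    exact add_mem_sup (sub_apply_mem_ker_inf_ker hcomm hQ2 hξQ hw.symm hη) (mem_range_self Q η)

end

/-- The two descriptions of the tangent space to the reduced fiber agree:
`{ξ ∈ ker Q | π ξ ∈ Im q} ⧸ Im Q ≅ (ker Q ∩ ker π) ⧸ (Im Q ∩ ker π)`,
the isomorphism being induced by `ξ ↦ ξ - Q η` where `π η = w` and `π ξ = q w`. -/
theorem reduced_fiber_isomorphism
    {K V W : Type*} [Field K] [AddCommGroup V] [Module K V]
    [AddCommGroup W] [Module K W]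
    (π : V →ₗ[K] W) (hsurj : Function.Surjective π)
    (Q : V →ₗ[K] V) (q : W →ₗ[K] W)
    (hcomm : π ∘ₗ Q = q ∘ₗ π)
    (hQ2 : Q ∘ₗ Q = 0) :
    ∃ e : (↥(LinearMap.ker Q ⊓ Submodule.comap π (LinearMap.range q)) ⧸
            (LinearMap.range Q).comap
              (LinearMap.ker Q ⊓ Submodule.comap π (LinearMap.range q)).subtype) ≃ₗ[K]
          (↥(LinearMap.ker Q ⊓ LinearMap.ker π) ⧸
            (LinearMap.range Q ⊓ LinearMap.ker π).comap
              (LinearMap.ker Q ⊓ LinearMap.ker π).subtype),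
      ∀ (ξ : V) (hξ : ξ ∈ LinearMap.ker Q ⊓ Submodule.comap π (LinearMap.range q))
        (w : W) (η : V), π ξ = q w → π η = w →
        ∃ h : ξ - Q η ∈ LinearMap.ker Q ⊓ LinearMap.ker π,
          e (Submodule.Quotient.mk ⟨ξ, hξ⟩) = Submodule.Quotient.mk ⟨ξ - Q η, h⟩ := by
  have hr : ker Q ⊓ ker π ⊓ (range Q ⊓ ker π) = ker Q ⊓ ker π ⊓ range Q := by
    rw [inf_comm (range Q), ← inf_assoc, inf_right_idem]
  refine ⟨(quotientEquivOfSupEq hr (ker_inf_ker_sup_range_eq hsurj hcomm hQ2)).symm,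
    fun ξ hξ w η hw hη => ⟨sub_apply_mem_ker_inf_ker hcomm hQ2 (mem_ker.1 (mem_inf.1 hξ).1) hw hη, ?_⟩⟩
  rw [LinearEquiv.symm_apply_eq, quotientEquivOfSupEq_mk, Submodule.Quotient.eq]
  simp
end

section
/- Let K be a field and H, A, M K-vector spaces. Let b : H → H → K be a bilinear form, P : A → M → K a bilinear pairing that is nondegenerate in its first argument (P(a, m) = 0 for all m ∈ M implies a = 0), and β : H → A, ψ : M → H linear maps such that P(β(h), m) = b(h, ψ(m)) for all h ∈ H and m ∈ M, and such that ker β = range ψ. Then the b-orthogonal of the range of ψ equals the range of ψ: {h ∈ H | b(h, ψ(m)) = 0 for all m ∈ M} = range ψ; in particular range ψ is a Lagrangian subspace of (H, b). -/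
theorem LinearMap.setOf_forall_apply_eq_zero_eq_ker_of_adjoint
    {R H N A M : Type*} [CommSemiring R] [AddCommMonoid H] [Module R H]
    [AddCommMonoid N] [Module R N] [AddCommMonoid A] [Module R A]
    [AddCommMonoid M] [Module R M]
    (b : H →ₗ[R] N →ₗ[R] R) (P : A →ₗ[R] M →ₗ[R] R)
    (hP : ∀ a : A, (∀ m : M, P a m = 0) → a = 0)
    (β : H →ₗ[R] A) (ψ : M →ₗ[R] N)
    (hadj : ∀ (h : H) (m : M), P (β h) m = b h (ψ m)) :
    {h : H | ∀ m : M, b h (ψ m) = 0} = LinearMap.ker β := by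
  ext h
  simp only [Set.mem_ofPred_eq, SetLike.mem_coe, LinearMap.mem_ker, ← hadj]
  exact ⟨hP _, fun hβ m => by rw [hβ, map_zero, LinearMap.zero_apply]⟩

/-- The `b`-orthogonal of the range of `ψ` equals the range of `ψ`; in
particular `range ψ` is a Lagrangian subspace of `(H, b)`. -/
theorem range_psi_lagrangian
    {K H A M : Type*} [Field K] [AddCommGroup H] [Module K H]
    [AddCommGroup A] [Module K A] [AddCommGroup M] [Module K M]
    (b : H →ₗ[K] H →ₗ[K] K) (P : A →ₗ[K] M →ₗ[K] K)
    (hP : ∀ a : A, (∀ m : M, P a m = 0) → a = 0)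
    (β : H →ₗ[K] A) (ψ : M →ₗ[K] H)
    (hadj : ∀ (h : H) (m : M), P (β h) m = b h (ψ m))
    (hexact : LinearMap.ker β = LinearMap.range ψ) :
    {h : H | ∀ m : M, b h (ψ m) = 0} = Set.range ψ := by
  rw [LinearMap.setOf_forall_apply_eq_zero_eq_ker_of_adjoint b P hP β ψ hadj, hexact,
    LinearMap.coe_range]
end
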